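/- arXiv:1808.08596 — 5 statements merged into one kernel-verified Lean document; each statement's English description precedes it below -/
import Mathlib

section
/- If there exists a splitting family of size κ, then Measuring_κ fails. That is, there exists a sequence ⟨𝒞_α : α ∈ ω₁ ∩ Lim⟩, where each 𝒞_α is a collection of at most κ many closed cofinal subsets of α, such that no club D ⊆ ω₁ measures the sequence: for every club D there is a limit point δ of D and some c ∈ 𝒞_δ such that for all β < δ, (D ∩ δ) \ β is neither a subset of c nor disjoint from c. -/
noncomputable section
open Set

/-- The first uncountable ordinal. -/
def omega1 : Ordinal := (Cardinal.aleph 1).ord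

/-- `δ` is a limit point of `D`. -/
def IsLimitPoint (D : Set Ordinal) (δ : Ordinal) : Prop :=
  0 < δ ∧ ∀ β < δ, ∃ ξ ∈ D, β < ξ ∧ ξ < δ

/-- `D` is a club subset of `ω₁`. -/
def IsClubω₁ (D : Set Ordinal) : Prop :=
  (∀ ξ ∈ D, ξ < omega1) ∧ (∀ β < omega1, ∃ ξ ∈ D, β < ξ) ∧
    (∀ δ < omega1, IsLimitPoint D δ → δ ∈ D)

/-- `X` measures `Y` (both of supremum `δ`). -/
def Measures (X Y : Set Ordinal) (δ : Ordinal) : Prop :=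
  ∃ β < δ, ({ξ ∈ X | β ≤ ξ} ⊆ Y ∨ ∀ ξ ∈ X, β ≤ ξ → ξ ∉ Y)

/-- `c` is a closed cofinal subset of the limit ordinal `α`. -/
def IsClosedCofinalIn (c : Set Ordinal) (α : Ordinal) : Prop :=
  (∀ ξ ∈ c, ξ < α) ∧ (∀ β < α, ∃ ξ ∈ c, β < ξ) ∧
    (∀ γ < α, IsLimitPoint c γ → γ ∈ c)

/-- A set of ordinals has order type `ω`. -/
def HasOrderTypeOmega (L : Set Ordinal) : Prop :=
  L.Infinite ∧ ∀ γ ∈ L, (L ∩ Set.Iio γ).Finite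

/-- A splitting family on ω. -/
def IsSplittingFamily (S : Set (Set ℕ)) : Prop :=
  ∀ x : Set ℕ, x.Infinite → ∃ A ∈ S, (x ∩ A).Infinite ∧ (x \ A).Infinite

/-!
Fix for every countable limit `α` a ladder `e : ℕ → α`, strictly increasing and cofinal, and
let `c_A = ⋃ n ∈ A, (e n, e (n + 1)]` for infinite `A` in the splitting family; blocks that are
open on the left make `c_A` closed. Given a club `D`, pick a limit point `δ < ω₁` of `D`. The set
`x` of indices of blocks of the ladder at `δ` met by `D` is infinite, so some `A` splits it; then
`D ∩ δ` meets cofinally many blocks inside `c_A` and cofinally many outside, so it does not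
measure `c_A`.
-/

open Cardinal Function

structure IsLadder {X : Type*} [Preorder X] (e : ℕ → X) (a : X) : Prop where
  strictMono : StrictMono e
  lt : ∀ n, e n < a
  cofinal : ∀ b < a, ∃ n, b < e n

section Blocks

variable {X : Type*} [LinearOrder X] {f : ℕ → X} {x : X} {n : ℕ}

theorem exists_mem_Ioc_add_one_of_lt_of_le (h0 : f 0 < x) {m : ℕ}
    (hm : x ≤ f m) : ∃ n, x ∈ Ioc (f n) (f (n + 1)) := by
  induction m with
  | zero => exact absurd hm h0.not_ge
  | succ m ih =>
    by_cases hx : x ≤ f m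
    · exact ih hx
    · exact ⟨m, not_le.mp hx, hm⟩

theorem Monotone.le_of_lt_of_mem_Ioc (hf : Monotone f) {N : ℕ} (hN : f N < x)
    (hx : x ∈ Ioc (f n) (f (n + 1))) : N ≤ n := by
  by_contra! h
  exact (hx.2.trans (hf h)).not_gt hN

theorem Monotone.eq_of_mem_Ioc (hf : Monotone f) {k : ℕ} (hn : x ∈ Ioc (f n) (f (n + 1)))
    (hk : x ∈ Ioc (f k) (f (k + 1))) : k = n := by
  by_contra h
  exact (hf.pairwise_disjoint_on_Ioc_succ h).le_bot ⟨hk, hn⟩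

end Blocks

def ladderUnion (e : ℕ → Ordinal) (A : Set ℕ) : Set Ordinal :=
  ⋃ n ∈ A, Ioc (e n) (e (n + 1))

def blocksMet (e : ℕ → Ordinal) (D : Set Ordinal) : Set ℕ :=
  {n | (D ∩ Ioc (e n) (e (n + 1))).Nonempty}

theorem Monotone.mem_ladderUnion_iff {e : ℕ → Ordinal} (he : Monotone e) {A : Set ℕ}
    {ξ : Ordinal} {n : ℕ} (hξ : ξ ∈ Ioc (e n) (e (n + 1))) : ξ ∈ ladderUnion e A ↔ n ∈ A := by
  simp only [ladderUnion, mem_iUnion, exists_prop]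
  exact ⟨fun ⟨k, hk, hξk⟩ => he.eq_of_mem_Ioc hξ hξk ▸ hk, fun hn => ⟨n, hn, hξ⟩⟩

namespace IsLadder

variable {e : ℕ → Ordinal} {α : Ordinal}

theorem isClosedCofinalIn_ladderUnion (he : IsLadder e α) {A : Set ℕ} (hA : A.Infinite) :
    IsClosedCofinalIn (ladderUnion e A) α := by
  have hmono := he.strictMono.monotone
  refine ⟨?_, fun β hβ => ?_, fun γ hγ ⟨hγ0, hlim⟩ => ?_⟩
  · simp only [ladderUnion, mem_iUnion]
    rintro ξ ⟨n, -, -, hξ⟩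
    exact hξ.trans_lt (he.lt _)
  · obtain ⟨m, hm⟩ := he.cofinal β hβ
    obtain ⟨n, hnA, hmn⟩ := hA.exists_gt m
    refine ⟨e (n + 1), (hmono.mem_ladderUnion_iff ⟨he.strictMono n.lt_succ_self, le_rfl⟩).2 hnA, ?_⟩
    exact hm.trans (he.strictMono (hmn.trans n.lt_succ_self))
  · obtain ⟨ξ, hξ, -, hξγ⟩ := hlim 0 hγ0
    simp only [ladderUnion, mem_iUnion] at hξ
    obtain ⟨k, -, hkξ, -⟩ := hξ
    obtain ⟨m, hm⟩ := he.cofinal γ hγ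
    obtain ⟨n, hγn⟩ :=
      exists_mem_Ioc_add_one_of_lt_of_le ((hmono k.zero_le).trans_lt (hkξ.trans hξγ)) hm.le
    -- points of the union accumulating at `γ` from above `e n` lie in the block of `γ`
    obtain ⟨ζ, hζ, hnζ, hζγ⟩ := hlim (e n) hγn.1
    have hζn : ζ ∈ Ioc (e n) (e (n + 1)) := ⟨hnζ, hζγ.le.trans hγn.2⟩
    exact (hmono.mem_ladderUnion_iff hγn).2 ((hmono.mem_ladderUnion_iff hζn).1 hζ)

theorem infinite_blocksMet (he : IsLadder e α) {D : Set Ordinal} (hD : IsLimitPoint D α) :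
    (blocksMet e D).Infinite := by
  have hmono := he.strictMono.monotone
  refine infinite_of_forall_exists_gt fun N => ?_
  obtain ⟨γ, hγD, hNγ, hγα⟩ := hD.2 (e (N + 1)) (he.lt _)
  obtain ⟨m, hm⟩ := he.cofinal γ hγα
  obtain ⟨n, hγn⟩ :=
    exists_mem_Ioc_add_one_of_lt_of_le ((hmono (N + 1).zero_le).trans_lt hNγ) hm.le
  exact ⟨n, ⟨γ, hγD, hγn⟩, hmono.le_of_lt_of_mem_Ioc hNγ hγn⟩

theorem not_measures_ladderUnion (he : IsLadder e α) {D : Set Ordinal} {A : Set ℕ}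
    (hin : (blocksMet e D ∩ A).Infinite) (hout : (blocksMet e D \ A).Infinite) :
    ¬ Measures (D ∩ Iio α) (ladderUnion e A) α := by
  have hmono := he.strictMono.monotone
  rintro ⟨β, hβ, hmeas⟩
  obtain ⟨m, hm⟩ := he.cofinal β hβ
  have key : ∀ n ∈ blocksMet e D, m < n →
      ∃ γ ∈ D ∩ Iio α, β ≤ γ ∧ (γ ∈ ladderUnion e A ↔ n ∈ A) := by
    rintro n ⟨γ, hγD, hγn⟩ hmn
    refine ⟨γ, ⟨hγD, hγn.2.trans_lt (he.lt _)⟩, ?_, hmono.mem_ladderUnion_iff hγn⟩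
    exact (hm.trans_le ((hmono hmn.le).trans hγn.1.le)).le
  rcases hmeas with hsub | hdisj
  · obtain ⟨n, ⟨hnD, hnA⟩, hmn⟩ := hout.exists_gt m
    obtain ⟨γ, hγ, hβγ, hγA⟩ := key n hnD hmn
    exact hnA (hγA.1 (hsub ⟨hγ, hβγ⟩))
  · obtain ⟨n, ⟨hnD, hnA⟩, hmn⟩ := hin.exists_gt m
    obtain ⟨γ, hγ, hβγ, hγA⟩ := key n hnD hmn
    exact hdisj γ hγ hβγ (hγA.2 hnA)

end IsLadder

theorem countable_Iio_of_lt_omega1 {α : Ordinal} (hα : α < omega1) : (Iio α).Countable := by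
  rw [← le_aleph0_iff_set_countable, mk_Iio_ordinal, lift_le_aleph0, ← lt_aleph_one_iff]
  exact lt_ord.mp hα

def climb (f : ℕ → Ordinal) : ℕ → Ordinal
  | 0 => 0
  | n + 1 => Order.succ (max (climb f n) (f n))

theorem exists_isLadder_of_lt_omega1 {α : Ordinal} (hα : α < omega1) (hlim : Order.IsSuccLimit α) :
    ∃ e, IsLadder e α := by
  obtain ⟨f, hf⟩ := (countable_Iio_of_lt_omega1 hα).exists_eq_range ⟨0, hlim.bot_lt⟩
  have hfα : ∀ n, f n < α := fun n => (hf ▸ mem_range_self n : f n ∈ Iio α)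
  have hclimb : ∀ n, climb f n < α := by
    intro n
    induction n with
    | zero => exact hlim.bot_lt
    | succ n ih => exact hlim.succ_lt (max_lt ih (hfα n))
  refine ⟨climb f, strictMono_nat_of_lt_succ fun n => ?_, hclimb, fun β hβ => ?_⟩
  · exact (le_max_left _ _).trans_lt (Order.lt_succ _)
  · obtain ⟨n, rfl⟩ : β ∈ range f := hf ▸ hβ
    exact ⟨n + 1, (le_max_right _ _).trans_lt (Order.lt_succ _)⟩

theorem IsLimitPoint.isSuccLimit {D : Set Ordinal} {δ : Ordinal} (hD : IsLimitPoint D δ) :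
    Order.IsSuccLimit δ := by
  refine Ordinal.isSuccLimit_iff.2 ⟨hD.1.ne', Order.isSuccPrelimit_of_succ_lt fun β hβ => ?_⟩
  obtain ⟨ξ, -, hβξ, hξδ⟩ := hD.2 β hβ
  exact (Order.succ_le_of_lt hβξ).trans_lt hξδ

theorem isLimitPoint_iSup {D : Set Ordinal} {g : ℕ → Ordinal} (hg : StrictMono g)
    (hgD : ∀ n, g n ∈ D) : IsLimitPoint D (⨆ n, g n) := by
  have hlt : ∀ n, g n < ⨆ n, g n := fun n => (hg n.lt_succ_self).trans_le (Ordinal.le_iSup g _)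
  refine ⟨pos_of_gt (hlt 0), fun β hβ => ?_⟩
  obtain ⟨n, hn⟩ := Ordinal.lt_iSup_iff.1 hβ
  exact ⟨g n, hgD n, hn, hlt n⟩

theorem iSup_lt_omega1 {g : ℕ → Ordinal} (hg : ∀ n, g n < omega1) : ⨆ n, g n < omega1 := by
  refine Ordinal.lift_iSup_lt_of_lt_cof ?_ hg
  simp [omega1]

theorem exists_isLimitPoint_lt_omega1 {D : Set Ordinal} (hbdd : ∀ ξ ∈ D, ξ < omega1)
    (hunbdd : ∀ β < omega1, ∃ ξ ∈ D, β < ξ) : ∃ δ < omega1, IsLimitPoint D δ := by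
  choose! F hFD hFlt using hunbdd
  have hg : ∀ n, F^[n + 1] 0 ∈ D := by
    intro n
    induction n with
    | zero => exact hFD 0 (by simpa [omega1] using Ordinal.omega_pos 1)
    | succ n ih => rw [iterate_succ_apply']; exact hFD _ (hbdd _ ih)
  have hmono : StrictMono fun n => F^[n + 1] 0 := strictMono_nat_of_lt_succ fun n => by
    simp only [iterate_succ_apply' F (n + 1)]
    exact hFlt _ (hbdd _ (hg n))
  exact ⟨_, iSup_lt_omega1 fun n => hbdd _ (hg n), isLimitPoint_iSup hmono hg⟩

/-- If there is a splitting family of size κ then Measuring_κ fails. -/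
theorem measuring_kappa_fails_of_splitting (κ : Cardinal)
    (S : Set (Set ℕ)) (hS : IsSplittingFamily S) (hcard : Cardinal.mk S = κ) :
    ∃ 𝒞 : Ordinal → Set (Set Ordinal),
      (∀ α, α < omega1 → Order.IsSuccLimit α →
        Cardinal.mk (𝒞 α) ≤ Cardinal.lift.{1} κ ∧ ∀ c ∈ 𝒞 α, IsClosedCofinalIn c α) ∧
      ∀ D : Set Ordinal, IsClubω₁ D →
        ∃ δ, δ < omega1 ∧ IsLimitPoint D δ ∧
          ∃ c ∈ 𝒞 δ, ¬ Measures (D ∩ Set.Iio δ) c δ := by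
  choose! E hE using fun (α : Ordinal) (hα : α < omega1) hlim =>
    exists_isLadder_of_lt_omega1 hα hlim
  refine ⟨fun α => ladderUnion (E α) '' {A ∈ S | A.Infinite}, fun α hα hlim => ⟨?_, ?_⟩,
    fun D hD => ?_⟩
  · calc #(ladderUnion (E α) '' {A ∈ S | A.Infinite})
        ≤ lift.{1} #{A ∈ S | A.Infinite} := by simpa using mk_image_le_lift (f := ladderUnion (E α))
      _ ≤ lift.{1} #S := lift_le.2 (mk_le_mk_of_subset (sep_subset S _))
      _ = lift.{1} κ := by rw [hcard]
  · rintro _ ⟨A, ⟨-, hA⟩, rfl⟩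
    exact (hE α hα hlim).isClosedCofinalIn_ladderUnion hA
  · obtain ⟨δ, hδ, hD⟩ := exists_isLimitPoint_lt_omega1 hD.1 hD.2.1
    have he := hE δ hδ hD.isSuccLimit
    obtain ⟨A, hAS, hin, hout⟩ := hS _ (he.infinite_blocksMet hD)
    exact ⟨δ, hδ, hD, _, ⟨A, ⟨hAS, hin.mono inter_subset_right⟩, rfl⟩,
      he.not_measures_ladderUnion hin hout⟩
end
end

section
/- For any cardinal κ ≥ 2, Measuring_{<κ} implies the failure of VWCG_{<κ}: if every sequence ⟨𝒞_α⟩ of families of fewer than κ closed cofinal subsets of α admits a measuring club, then there is no sequence ⟨ℒ_α : α ∈ ω₁ ∩ Lim⟩, with each ℒ_α a nonempty family of fewer than κ cofinal subsets of α of order type ω, such that for every club D ⊆ ω₁ there exist a limit ordinal α and L ∈ ℒ_α with L ∩ D infinite. -/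
noncomputable section
open Set

/-- `D` is a club subset of `ω₁`. -/
def IsClubOmega1 (D : Set Ordinal) : Prop :=
  (∀ ξ ∈ D, ξ < omega1) ∧ (∀ β < omega1, ∃ ξ ∈ D, β < ξ) ∧
    (∀ δ < omega1, IsLimitPoint D δ → δ ∈ D)

/-- Measuring_{<κ}. -/
def MeasuringLt (κ : Cardinal.{0}) : Prop :=
  ∀ 𝒞 : Ordinal → Set (Set Ordinal),
    (∀ α, α < omega1 → Order.IsSuccLimit α →
      Cardinal.mk (𝒞 α) < Cardinal.lift.{1,0} κ ∧ ∀ c ∈ 𝒞 α, IsClosedCofinalIn c α) →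
    ∃ D : Set Ordinal, IsClubOmega1 D ∧
      ∀ δ, δ < omega1 → IsLimitPoint D δ → ∀ c ∈ 𝒞 δ, Measures (D ∩ Set.Iio δ) c δ

/-- VWCG_{<κ}. -/
def VWCGLt (κ : Cardinal.{0}) : Prop :=
  ∃ ℒ : Ordinal → Set (Set Ordinal),
    (∀ α, α < omega1 → Order.IsSuccLimit α →
      (ℒ α).Nonempty ∧ Cardinal.mk (ℒ α) < Cardinal.lift.{1,0} κ ∧
      ∀ L ∈ ℒ α, (∀ ξ ∈ L, ξ < α) ∧ (∀ β < α, ∃ ξ ∈ L, β < ξ) ∧ HasOrderTypeOmega L) ∧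
    ∀ D : Set Ordinal, IsClubOmega1 D →
      ∃ α, α < omega1 ∧ Order.IsSuccLimit α ∧ ∃ L ∈ ℒ α, (L ∩ D).Infinite

/-!
Given a VWCG sequence `ℒ`, its members have order type `ω`, so they have no limit points below
their supremum and are vacuously closed: Measuring yields a club `D` measuring every `L ∈ ℒ_α`
whenever `α` is a limit point of `D`. Guess the club `D'` of limit points of `D`: some `L ∈ ℒ_α`
meets `D'` in an infinite, hence (order type `ω`) cofinal, set, so `α` is a limit point of `D`.
Now `L` cannot contain a tail of `D ∩ α`, since every `γ ∈ L ∩ D'` has infinitely many points of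
`D` below it while `L ∩ γ` is finite; nor can it be disjoint from one, since `L ∩ D' ⊆ L ∩ D` is
cofinal in `α`.
-/

lemma IsLimitPoint.infinite_inter_Ioo {S : Set Ordinal} {β γ : Ordinal}
    (hS : IsLimitPoint S γ) (hβ : β < γ) : (S ∩ Ioo β γ).Infinite := by
  intro hfin
  obtain ⟨ξ, hξS, hβξ, hξγ⟩ := hS.2 β hβ
  obtain ⟨m, hm, hmax⟩ := hfin.exists_maximalFor id _ ⟨ξ, hξS, hβξ, hξγ⟩
  obtain ⟨η, hηS, hmη, hηγ⟩ := hS.2 m hm.2.2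
  exact (hmax ⟨hηS, hm.2.1.trans hmη, hηγ⟩ hmη.le).not_gt hmη

lemma IsLimitPoint.mono {S T : Set Ordinal} {γ : Ordinal} (hST : S ⊆ T)
    (hS : IsLimitPoint S γ) : IsLimitPoint T γ :=
  ⟨hS.1, fun β hβ => (hS.2 β hβ).imp fun _ hξ => ⟨hST hξ.1, hξ.2⟩⟩

lemma isLimitPoint_iSup_of_strictMono {f : ℕ → Ordinal} (hf : StrictMono f) :
    IsLimitPoint (range f) (⨆ n, f n) := by
  have hlt : ∀ n, f n < ⨆ n, f n := fun n =>
    (hf n.lt_succ_self).trans_le (Ordinal.le_iSup f (n + 1))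
  refine ⟨pos_of_gt (hlt 0), fun β hβ => ?_⟩
  obtain ⟨n, hn⟩ := Ordinal.lt_iSup_iff.1 hβ
  exact ⟨f n, mem_range_self n, hn, hlt n⟩

lemma exists_isLimitPoint_gt {S : Set Ordinal} (hS : ∀ ξ ∈ S, ξ < omega1)
    (hunb : ∀ β < omega1, ∃ ξ ∈ S, β < ξ) {β : Ordinal} (hβ : β < omega1) :
    ∃ δ < omega1, β < δ ∧ IsLimitPoint S δ := by
  have hnext : ∀ b : Iio omega1, ∃ ξ : Iio omega1, ξ.1 ∈ S ∧ b < ξ := fun b => by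
    obtain ⟨ξ, hξS, hbξ⟩ := hunb b b.2
    exact ⟨⟨ξ, hS ξ hξS⟩, hξS, hbξ⟩
  choose F hFS hFgt using hnext
  set f : ℕ → Ordinal := fun n => (F^[n + 1] ⟨β, hβ⟩ : Iio omega1)
  have hf : StrictMono f := strictMono_nat_of_lt_succ fun n => by
    simp only [f, Function.iterate_succ_apply' F (n + 1)]
    exact hFgt _
  have hfS : range f ⊆ S := by
    rintro _ ⟨n, rfl⟩
    simp only [f, Function.iterate_succ_apply']
    exact hFS _
  refine ⟨⨆ n, f n, ?_, (show β < f 0 from hFgt _).trans_le (Ordinal.le_iSup f 0), ?_⟩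
  · have hlt : ∀ n, f n < omega1 := fun n => (F^[n + 1] ⟨β, hβ⟩).2
    rw [omega1, Cardinal.ord_aleph] at hlt ⊢
    exact Ordinal.iSup_lt_omega_one hlt
  · exact (isLimitPoint_iSup_of_strictMono hf).mono hfS

def limitPoints (D : Set Ordinal) : Set Ordinal :=
  {δ | δ < omega1 ∧ IsLimitPoint D δ}

lemma IsClubOmega1.limitPoints_subset {D : Set Ordinal} (hD : IsClubOmega1 D) :
    limitPoints D ⊆ D :=
  fun δ hδ => hD.2.2 δ hδ.1 hδ.2

lemma IsClubOmega1.limitPoints {D : Set Ordinal} (hD : IsClubOmega1 D) :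
    IsClubOmega1 (limitPoints D) := by
  refine ⟨fun δ hδ => hδ.1, fun β hβ => ?_, fun δ hδ hlp => ⟨hδ, hlp.1, fun β hβ => ?_⟩⟩
  · obtain ⟨δ, hδ, hβδ, hlp⟩ := exists_isLimitPoint_gt hD.1 hD.2.1 hβ
    exact ⟨δ, ⟨hδ, hlp⟩, hβδ⟩
  · obtain ⟨ξ, hξ, hβξ, hξδ⟩ := hlp.2 β hβ
    obtain ⟨η, hηD, hβη, hηξ⟩ := hξ.2.2 β hβξ
    exact ⟨η, hηD, hβη, hηξ.trans hξδ⟩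

namespace HasOrderTypeOmega

variable {L : Set Ordinal}

lemma not_isLimitPoint (hL : HasOrderTypeOmega L) {γ ξ : Ordinal} (hξ : ξ ∈ L) (hγξ : γ ≤ ξ) :
    ¬ IsLimitPoint L γ :=
  fun hγ => (hγ.infinite_inter_Ioo hγ.1) <|
    (hL.2 ξ hξ).subset fun _ hη => ⟨hη.1, hη.2.2.trans_le hγξ⟩

lemma isClosedCofinalIn (hL : HasOrderTypeOmega L) {α : Ordinal}
    (hlt : ∀ ξ ∈ L, ξ < α) (hcof : ∀ β < α, ∃ ξ ∈ L, β < ξ) : IsClosedCofinalIn L α :=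
  ⟨hlt, hcof, fun γ hγ hγL => absurd hγL <|
    let ⟨_, hξL, hγξ⟩ := hcof γ hγ
    hL.not_isLimitPoint hξL hγξ.le⟩

lemma exists_mem_inter_ge (hL : HasOrderTypeOmega L) {S : Set Ordinal}
    (hLS : (L ∩ S).Infinite) {ξ : Ordinal} (hξ : ξ ∈ L) : ∃ η ∈ L ∩ S, ξ ≤ η := by
  by_contra! h
  exact hLS ((hL.2 ξ hξ).subset fun η hη => ⟨hη.1, h η hη⟩)

lemma not_measures (hL : HasOrderTypeOmega L) {D : Set Ordinal} {α : Ordinal}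
    (hLα : ∀ ξ ∈ L, ξ < α)
    (hcof : ∀ β < α, ∃ γ ∈ L, β < γ ∧ γ ∈ D ∧ IsLimitPoint D γ) :
    ¬ Measures (D ∩ Iio α) L α := by
  rintro ⟨β, hβ, htail | hdisj⟩
  all_goals obtain ⟨γ, hγL, hβγ, hγD, hlp⟩ := hcof β hβ
  · refine hlp.infinite_inter_Ioo hβγ ((hL.2 γ hγL).subset ?_)
    rintro η ⟨hηD, hβη, hηγ⟩
    exact ⟨htail ⟨⟨hηD, hηγ.trans (hLα γ hγL)⟩, hβη.le⟩, hηγ⟩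
  · exact hdisj γ ⟨hγD, hLα γ hγL⟩ hβγ.le hγL

end HasOrderTypeOmega

theorem vwcg_fails_of_measuring_general (κ : Cardinal.{0}) (hM : MeasuringLt κ) :
    ¬ VWCGLt κ := by
  rintro ⟨ℒ, hℒ, hguess⟩
  obtain ⟨D, hD, hmeas⟩ := hM ℒ fun α hα hlim => by
    obtain ⟨-, hcard, hmem⟩ := hℒ α hα hlim
    exact ⟨hcard, fun L hL => let ⟨hlt, hcof, hω⟩ := hmem L hL; hω.isClosedCofinalIn hlt hcof⟩
  obtain ⟨α, hα, hlim, L, hL, hinf⟩ := hguess _ hD.limitPoints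
  obtain ⟨hLα, hLcof, hω⟩ := (hℒ α hα hlim).2.2 L hL
  have hcof : ∀ β < α, ∃ γ ∈ L, β < γ ∧ γ ∈ D ∧ IsLimitPoint D γ := fun β hβ => by
    obtain ⟨ξ, hξL, hβξ⟩ := hLcof β hβ
    obtain ⟨γ, ⟨hγL, hγD'⟩, hξγ⟩ := hω.exists_mem_inter_ge hinf hξL
    exact ⟨γ, hγL, hβξ.trans_le hξγ, hD.limitPoints_subset hγD', hγD'.2⟩
  have hαD : IsLimitPoint D α := ⟨hlim.pos, fun β hβ =>
    let ⟨γ, hγL, hβγ, hγD, _⟩ := hcof β hβ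
    ⟨γ, hγD, hβγ, hLα γ hγL⟩⟩
  exact hω.not_measures hLα hcof (hmeas α hα hαD L hL)

/-- For κ ≥ 2, Measuring_{<κ} implies the failure of VWCG_{<κ}. -/
theorem vwcg_fails_of_measuring (κ : Cardinal.{0}) (hκ : 2 ≤ κ) (hM : MeasuringLt κ) :
    ¬ VWCGLt κ :=
  vwcg_fails_of_measuring_general κ hM
end
end

section
/- Let δ < ω₁ be a limit ordinal, C_δ ⊆ δ cofinal of order type ω with increasing enumeration ⟨C_δ(n) : n < ω⟩, h_δ : ω → δ a bijection, and r : ω → ω. Define A = C_δ ∪ ⋃_{n<ω} (h_δ[r(n)] \ C_δ(n)), where h_δ[m] = {h_δ(k) : k < m} and X \ γ = {ξ ∈ X : ξ ≥ γ}. Then A has order type ω and sup(A) = δ. -/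
noncomputable section
open Set

section GuessSet

variable {α : Type*} [Preorder α] {C h : ℕ → α} {r : ℕ → ℕ}

def guessSet (C h : ℕ → α) (r : ℕ → ℕ) : Set α :=
  Set.range C ∪ ⋃ n, {ξ | ξ ∈ h '' Set.Iio (r n) ∧ C n ≤ ξ}

theorem range_subset_guessSet : Set.range C ⊆ guessSet C h r :=
  Set.subset_union_left

theorem guessSet_subset_Iio {δ : α} (hC : ∀ n, C n < δ) (hh : ∀ n, h n < δ) :
    guessSet C h r ⊆ Set.Iio δ := by
  rintro ξ (⟨m, rfl⟩ | hξ)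
  · exact hC m
  · obtain ⟨n, ⟨k, -, rfl⟩, -⟩ := Set.mem_iUnion.mp hξ
    exact hh k

/-- The `n`-th piece lies above `C n`, so only the pieces with `n < N` meet `Iio (C N)`. -/
theorem guessSet_inter_Iio_subset (hC : StrictMono C) {γ : α} {N : ℕ} (hγ : γ ≤ C N) :
    guessSet C h r ∩ Set.Iio γ ⊆ C '' Set.Iio N ∪ ⋃ n ∈ Set.Iio N, h '' Set.Iio (r n) := by
  rintro ξ ⟨⟨m, rfl⟩ | hξ, hξγ⟩
  · exact Or.inl ⟨m, hC.lt_iff_lt.mp (lt_of_lt_of_le hξγ hγ), rfl⟩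
  · obtain ⟨n, hξh, hCξ⟩ := Set.mem_iUnion.mp hξ
    exact Or.inr (Set.mem_biUnion
      (hC.lt_iff_lt.mp ((hCξ.trans_lt hξγ).trans_le hγ)) hξh)

theorem finite_guessSet_inter_Iio (hC : StrictMono C) {γ : α} {N : ℕ} (hγ : γ ≤ C N) :
    (guessSet C h r ∩ Set.Iio γ).Finite :=
  (((Set.finite_Iio N).image C).union
    ((Set.finite_Iio N).biUnion fun n _ => (Set.finite_Iio (r n)).image h)).subset
    (guessSet_inter_Iio_subset hC hγ)

end GuessSet

theorem A_order_type_omega_general (δ : Ordinal)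
    (C : ℕ → Ordinal) (hCmono : StrictMono C) (hClt : ∀ n, C n < δ)
    (hCcof : ∀ β < δ, ∃ n, β < C n)
    (h : ℕ → Ordinal) (hhlt : ∀ n, h n < δ)
    (r : ℕ → ℕ) :
    HasOrderTypeOmega
        (Set.range C ∪ ⋃ n, {ξ | ξ ∈ h '' Set.Iio (r n) ∧ C n ≤ ξ}) ∧
      (∀ ξ ∈ Set.range C ∪ ⋃ n, {ξ | ξ ∈ h '' Set.Iio (r n) ∧ C n ≤ ξ}, ξ < δ) ∧
      (∀ β < δ, ∃ ξ ∈ Set.range C ∪ ⋃ n, {ξ | ξ ∈ h '' Set.Iio (r n) ∧ C n ≤ ξ}, β < ξ) := by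
  have hA_lt : guessSet C h r ⊆ Set.Iio δ := guessSet_subset_Iio hClt hhlt
  refine ⟨⟨?_, fun γ hγ => ?_⟩, hA_lt, fun β hβ => ?_⟩
  · exact (Set.infinite_range_of_injective hCmono.injective).mono range_subset_guessSet
  · obtain ⟨N, hN⟩ := hCcof γ (hA_lt hγ)
    exact finite_guessSet_inter_Iio hCmono hN.le
  · obtain ⟨n, hn⟩ := hCcof β hβ
    exact ⟨C n, range_subset_guessSet ⟨n, rfl⟩, hn⟩

/-- The set A = C_δ ∪ ⋃ n, (h[r n] \ C_δ(n)) has order type ω and supremum δ. -/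
theorem A_order_type_omega (δ : Ordinal) (hδ : Order.IsSuccLimit δ) (hδω1 : δ < omega1)
    (C : ℕ → Ordinal) (hCmono : StrictMono C) (hClt : ∀ n, C n < δ)
    (hCcof : ∀ β < δ, ∃ n, β < C n)
    (h : ℕ → Ordinal) (hhlt : ∀ n, h n < δ) (hhinj : Function.Injective h)
    (hhsurj : ∀ ξ < δ, ∃ n, h n = ξ)
    (r : ℕ → ℕ) :
    HasOrderTypeOmega
        (Set.range C ∪ ⋃ n, {ξ | ξ ∈ h '' Set.Iio (r n) ∧ C n ≤ ξ}) ∧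
      (∀ ξ ∈ Set.range C ∪ ⋃ n, {ξ | ξ ∈ h '' Set.Iio (r n) ∧ C n ≤ ξ}, ξ < δ) ∧
      (∀ β < δ, ∃ ξ ∈ Set.range C ∪ ⋃ n, {ξ | ξ ∈ h '' Set.Iio (r n) ∧ C n ≤ ξ}, β < ξ) :=
  A_order_type_omega_general δ C hCmono hClt hCcof h hhlt r
end
end

section
/- Let δ < ω₁ be a limit ordinal, C_δ ⊆ δ cofinal of order type ω with increasing enumeration C_δ(n), h_δ : ω → δ a bijection, C ⊆ ω₁ a club with δ a limit point of C, and define g(n) = min{m < ω : h_δ(m) ∈ C and h_δ(m) ≥ C_δ(n)}. If r : ω → ω satisfies r(n) > g(n) for infinitely many n, then the set A = C_δ ∪ ⋃_{n<ω} (h_δ[r(n)] \ C_δ(n)) has infinite intersection with C. -/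
/-! The points `h (g n)` with `g n < r n` lie in `C` and in `h[r n] \ C_δ(n)`, hence in `A ∩ C`.
They lie above `C_δ(n)` for infinitely many `n`, so they are cofinal in `δ`, which no finite
set of ordinals below `δ` is. -/

noncomputable section
open Set

/-- `D` is a club subset of `ω₁`. -/
def IsClubSet (D : Set Ordinal) : Prop :=
  (∀ ξ ∈ D, ξ < omega1) ∧ (∀ β < omega1, ∃ ξ ∈ D, β < ξ) ∧
    (∀ δ < omega1, IsLimitPoint D δ → δ ∈ D)

theorem Set.infinite_of_forall_lt_exists_gt {α : Type*} [LinearOrder α] {s : Set α} {δ : α}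
    (hs : s ⊆ Iio δ) (hcof : ∀ β < δ, ∃ x ∈ s, β < x) (hne : s.Nonempty) : s.Infinite := by
  intro hfin
  obtain ⟨β, hβ⟩ := hfin.exists_maximal hne
  obtain ⟨x, hx, hβx⟩ := hcof β (hs hβ.prop)
  exact hβx.not_ge (hβ.2 hx hβx.le)

theorem A_meets_club_general (δ : Ordinal)
    (Cd : ℕ → Ordinal) (hCmono : StrictMono Cd)
    (hCcof : ∀ β < δ, ∃ n, β < Cd n)
    (h : ℕ → Ordinal) (hhlt : ∀ n, h n < δ)
    (C : Set Ordinal)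
    (g : ℕ → ℕ)
    (hg : ∀ n, (h (g n) ∈ C ∧ Cd n ≤ h (g n)) ∧
      ∀ m, h m ∈ C → Cd n ≤ h m → g n ≤ m)
    (r : ℕ → ℕ) (hr : {n | g n < r n}.Infinite) :
    ((Set.range Cd ∪ ⋃ n, {ξ | ξ ∈ h '' Set.Iio (r n) ∧ Cd n ≤ ξ}) ∩ C).Infinite := by
  set witnesses := (fun n => h (g n)) '' {n | g n < r n}
  have hsub : witnesses ⊆
      (Set.range Cd ∪ ⋃ n, {ξ | ξ ∈ h '' Set.Iio (r n) ∧ Cd n ≤ ξ}) ∩ C := by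
    rintro _ ⟨n, hn, rfl⟩
    exact ⟨Or.inr (mem_iUnion.2 ⟨n, ⟨g n, hn, rfl⟩, (hg n).1.2⟩), (hg n).1.1⟩
  have hcof : ∀ β < δ, ∃ ξ ∈ witnesses, β < ξ := by
    intro β hβ
    obtain ⟨m, hm⟩ := hCcof β hβ
    obtain ⟨n, hn, hmn⟩ := hr.exists_gt m
    exact ⟨h (g n), ⟨n, hn, rfl⟩, hm.trans_le ((hCmono.monotone hmn.le).trans (hg n).1.2)⟩
  refine (Set.infinite_of_forall_lt_exists_gt ?_ hcof (hr.nonempty.image _)).mono hsub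
  rintro _ ⟨n, -, rfl⟩
  exact hhlt (g n)

/-- If r(n) > g(n) infinitely often, where g(n) is least with h(g n) ∈ C above C_δ(n),
then A = C_δ ∪ ⋃ n, (h[r n] \ C_δ(n)) meets the club C in an infinite set. -/
theorem A_meets_club (δ : Ordinal) (hδ : Order.IsSuccLimit δ) (hδω1 : δ < omega1)
    (Cd : ℕ → Ordinal) (hCmono : StrictMono Cd) (hClt : ∀ n, Cd n < δ)
    (hCcof : ∀ β < δ, ∃ n, β < Cd n)
    (h : ℕ → Ordinal) (hhlt : ∀ n, h n < δ) (hhinj : Function.Injective h)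
    (hhsurj : ∀ ξ < δ, ∃ n, h n = ξ)
    (C : Set Ordinal) (hC : IsClubSet C) (hlim : IsLimitPoint C δ)
    (g : ℕ → ℕ)
    (hg : ∀ n, (h (g n) ∈ C ∧ Cd n ≤ h (g n)) ∧
      ∀ m, h m ∈ C → Cd n ≤ h m → g n ≤ m)
    (r : ℕ → ℕ) (hr : {n | g n < r n}.Infinite) :
    ((Set.range Cd ∪ ⋃ n, {ξ | ξ ∈ h '' Set.Iio (r n) ∧ Cd n ≤ ξ}) ∩ C).Infinite :=
  A_meets_club_general δ Cd hCmono hCcof h hhlt C g hg r hr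
end
end

section
/- Measuring implies Measuring_ω: if for every sequence ⟨c_α : α ∈ ω₁ ∩ Lim⟩ of closed cofinal subsets c_α ⊆ α there is a club D such that D ∩ α measures c_α for every limit point α of D, then for every sequence ⟨𝒞_α : α ∈ ω₁ ∩ Lim⟩, where each 𝒞_α is a countable family of closed cofinal subsets of α, there is a single club D ⊆ ω₁ such that for every limit point δ of D and every c ∈ 𝒞_δ, D ∩ δ measures c. -/
noncomputable section
open Set

/-!
Enumerate each countable family `𝒞 α` as `n ↦ e α n`, padding with `Iio α`, which is closed and
cofinal in every limit `α`. Measuring, applied to each of the countably many sequences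
`α ↦ e α n`, gives clubs `D n`, and `⋂ n, D n` is again a club because `ω₁` has uncountable
cofinality. Shrinking a club keeps it measuring, so `⋂ n, D n` measures every member of every `𝒞 δ`.

The hypothesis and the conclusion of the theorem quantify over ordinals in two unrelated universes;
lifting from universe `0` identifies the ordinals below `ω₁` in each of them with those of
universe `0`, and preserves every notion involved.
-/

open Ordinal Order
open scoped Cardinal

universe u v

section Club

variable {D E : Set Ordinal.{u}} {δ : Ordinal.{u}}

theorem omega1_eq_omega_one : omega1.{u} = ω₁ := Cardinal.ord_aleph 1

theorem isSuccLimit_omega1 : IsSuccLimit omega1.{u} :=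
  omega1_eq_omega_one ▸ Cardinal.isSuccLimit_omega 1

theorem cof_Iio_omega1_ne_aleph0 : Order.cof (Iio omega1.{u}) ≠ ℵ₀ := by
  rw [omega1_eq_omega_one, cof_Iio, ← lift_cof, Cardinal.cof_omega_one, Cardinal.lift_aleph,
    Ordinal.lift_one]
  exact Cardinal.aleph0_lt_aleph_one.ne'

theorem IsLimitPoint.mono_s8 (hDE : D ⊆ E) (h : IsLimitPoint D δ) : IsLimitPoint E δ :=
  ⟨h.1, fun β hβ ↦ let ⟨ξ, hξ, hβξ, hξδ⟩ := h.2 β hβ; ⟨ξ, hDE hξ, hβξ, hξδ⟩⟩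

theorem IsLimitPoint.isSuccLimit_s8 (h : IsLimitPoint D δ) : IsSuccLimit δ := by
  refine ⟨not_isMin_iff_ne_bot.2 h.1.ne', isSuccPrelimit_of_succ_lt fun β hβ ↦ ?_⟩
  obtain ⟨ξ, -, hβξ, hξδ⟩ := h.2 β hβ
  exact (succ_le_of_lt hβξ).trans_lt hξδ

theorem isLimitPoint_of_isLUB {o : Ordinal.{u}} {t : Set (Iio o)} {a : Iio o} (ht : t.Nonempty)
    (hta : IsLUB t a) (ha : a ∉ t) : IsLimitPoint (Subtype.val '' t) a := by
  have lt_of_mem : ∀ x ∈ t, x < a := fun x hx ↦ (hta.1 hx).lt_of_ne (ne_of_mem_of_not_mem hx ha)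
  refine ⟨?_, fun β hβ ↦ ?_⟩
  · obtain ⟨x, hx⟩ := ht
    exact (zero_le (a := x.1)).trans_lt (lt_of_mem x hx)
  · obtain ⟨x, hx, hβx⟩ : ∃ x ∈ t, (⟨β, hβ.trans a.2⟩ : Iio o) < x := by
      simpa [upperBounds] using fun h ↦ hβ.not_ge (hta.2 h)
    exact ⟨x, mem_image_of_mem _ hx, hβx, lt_of_mem x hx⟩

theorem isLUB_of_isLimitPoint {o : Ordinal.{u}} (hδ : δ < o) (h : IsLimitPoint D δ) :
    IsLUB {x : Iio o | x.1 ∈ D ∧ x.1 < δ} ⟨δ, hδ⟩ := by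
  refine ⟨fun x hx ↦ hx.2.le, fun b hb ↦ ?_⟩
  by_contra! hbδ
  obtain ⟨ξ, hξ, hbξ, hξδ⟩ := h.2 b hbδ
  exact (hb (a := ⟨ξ, hξδ.trans hδ⟩) ⟨hξ, hξδ⟩).not_gt hbξ

theorem isClubOmega1_iff :
    IsClubOmega1 D ↔ D ⊆ Iio omega1 ∧ IsClub (Subtype.val ⁻¹' D : Set (Iio omega1.{u})) := by
  refine ⟨fun hD ↦ ⟨hD.1, ⟨?_, fun x ↦ ?_⟩⟩, fun ⟨hDω, hD⟩ ↦ ⟨hDω, fun β hβ ↦ ?_, fun δ hδ h ↦ ?_⟩⟩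
  · rw [dirSupClosed_iff_of_linearOrder]
    intro t htD ht a hta
    by_cases ha : a ∈ t
    · exact htD ha
    · refine hD.2.2 a a.2 ((isLimitPoint_of_isLUB ht hta ha).mono_s8 ?_)
      rintro _ ⟨x, hx, rfl⟩
      exact htD hx
  · obtain ⟨ξ, hξ, hxξ⟩ := hD.2.1 x x.2
    exact ⟨⟨ξ, hD.1 ξ hξ⟩, hξ, hxξ.le⟩
  · obtain ⟨ξ, hξ, hβξ⟩ := hD.isCofinal ⟨succ β, isSuccLimit_omega1.succ_lt hβ⟩
    exact ⟨ξ, hξ, (lt_succ β).trans_le hβξ⟩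
  · have hne : {x : Iio omega1 | x.1 ∈ D ∧ x.1 < δ}.Nonempty := by
      obtain ⟨ξ, hξ, -, hξδ⟩ := h.2 0 h.1
      exact ⟨⟨ξ, hξδ.trans hδ⟩, hξ, hξδ⟩
    exact hD.isLUB_mem (fun x hx ↦ hx.1) hne (isLUB_of_isLimitPoint hδ h)

theorem isClubOmega1_iInter {ι : Type*} [Countable ι] [Nonempty ι] {D : ι → Set Ordinal.{u}}
    (hD : ∀ i, IsClubOmega1 (D i)) : IsClubOmega1 (⋂ i, D i) := by
  simp only [isClubOmega1_iff, preimage_iInter] at hD ⊢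
  exact ⟨(iInter_subset _ (Classical.arbitrary ι)).trans (hD _).1,
    IsClub.iInter_of_countable cof_Iio_omega1_ne_aleph0 fun i ↦ (hD i).2⟩

end Club

theorem Measures.subset {X X' Y : Set Ordinal} {δ : Ordinal} (h : Measures X' Y δ)
    (hX : X ⊆ X') : Measures X Y δ := by
  obtain ⟨β, hβ, hsub | hdisj⟩ := h
  · exact ⟨β, hβ, .inl fun ξ hξ ↦ hsub ⟨hX hξ.1, hξ.2⟩⟩
  · exact ⟨β, hβ, .inr fun ξ hξ ↦ hdisj ξ (hX hξ)⟩

theorem isClosedCofinalIn_Iio {α : Ordinal} (hα : IsSuccLimit α) : IsClosedCofinalIn (Iio α) α :=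
  ⟨fun _ ↦ id, fun β hβ ↦ ⟨succ β, hα.succ_lt hβ, lt_succ β⟩, fun _ hγ _ ↦ hγ⟩

theorem exists_seq_isClosedCofinalIn {𝒞 : Set (Set Ordinal.{u})} {α : Ordinal.{u}}
    (h𝒞 : 𝒞.Countable) (hα : IsSuccLimit α) (hc : ∀ c ∈ 𝒞, IsClosedCofinalIn c α) :
    ∃ e : ℕ → Set Ordinal, 𝒞 ⊆ range e ∧ ∀ n, IsClosedCofinalIn (e n) α := by
  obtain ⟨e, he⟩ := (h𝒞.insert (Iio α)).exists_eq_range (insert_nonempty _ _)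
  refine ⟨e, he ▸ subset_insert _ _, fun n ↦ ?_⟩
  obtain hn | hn := (he.symm ▸ mem_range_self n : e n ∈ insert (Iio α) 𝒞)
  · exact hn ▸ isClosedCofinalIn_Iio hα
  · exact hc _ hn

def Measuring : Prop :=
  ∀ c : Ordinal.{u} → Set Ordinal.{u},
    (∀ α, α < omega1 → IsSuccLimit α → IsClosedCofinalIn (c α) α) →
    ∃ D : Set Ordinal, IsClubOmega1 D ∧
      ∀ δ, δ < omega1 → IsLimitPoint D δ → Measures (D ∩ Iio δ) (c δ) δ

def MeasuringOmega : Prop :=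
  ∀ 𝒞 : Ordinal.{u} → Set (Set Ordinal.{u}),
    (∀ α, α < omega1 → IsSuccLimit α → (𝒞 α).Countable ∧ ∀ c ∈ 𝒞 α, IsClosedCofinalIn c α) →
    ∃ D : Set Ordinal, IsClubOmega1 D ∧
      ∀ δ, δ < omega1 → IsLimitPoint D δ → ∀ c ∈ 𝒞 δ, Measures (D ∩ Iio δ) c δ

theorem Measuring.measuringOmega (hM : Measuring.{u}) : MeasuringOmega.{u} := by
  intro 𝒞 h𝒞
  have enum (α : Ordinal) : ∃ e : ℕ → Set Ordinal, α < omega1 → IsSuccLimit α →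
      𝒞 α ⊆ range e ∧ ∀ n, IsClosedCofinalIn (e n) α := by
    by_cases hα : α < omega1 ∧ IsSuccLimit α
    · obtain ⟨hcount, hc⟩ := h𝒞 α hα.1 hα.2
      obtain ⟨e, he⟩ := exists_seq_isClosedCofinalIn hcount hα.2 hc
      exact ⟨e, fun _ _ ↦ he⟩
    · exact ⟨fun _ ↦ ∅, fun h h' ↦ (hα ⟨h, h'⟩).elim⟩
  choose e he using enum
  choose D hD using fun n ↦ hM (e · n) fun α hα hlim ↦ (he α hα hlim).2 n
  refine ⟨⋂ n, D n, isClubOmega1_iInter fun n ↦ (hD n).1, fun δ hδ hlim c hc ↦ ?_⟩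
  obtain ⟨n, rfl⟩ := (he δ hδ hlim.isSuccLimit_s8).1 hc
  exact ((hD n).2 δ hδ (hlim.mono_s8 (iInter_subset D n))).subset
    (inter_subset_inter_left _ (iInter_subset D n))

namespace Ordinal

variable {a : Ordinal.{v}}

theorem lift_injective : Function.Injective lift.{u, v} := fun _ _ ↦ lift_inj.1

theorem lift_pos : 0 < lift.{u} a ↔ 0 < a := by
  simpa using lift_lt.{u} (a := 0) (b := a)

theorem forall_lt_lift_iff {p : Ordinal.{max v u} → Prop} :
    (∀ b < lift.{u} a, p b) ↔ ∀ b < a, p (lift.{u} b) := by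
  refine ⟨fun h b hb ↦ h _ (lift_lt.2 hb), fun h b hb ↦ ?_⟩
  obtain ⟨b', hb', rfl⟩ := lt_lift_iff.1 hb
  exact h b' hb'

theorem exists_lt_lift_iff {p : Ordinal.{max v u} → Prop} :
    (∃ b < lift.{u} a, p b) ↔ ∃ b < a, p (lift.{u} b) := by
  refine ⟨fun ⟨b, hb, hp⟩ ↦ ?_, fun ⟨b, hb, hp⟩ ↦ ⟨_, lift_lt.2 hb, hp⟩⟩
  obtain ⟨b', hb', rfl⟩ := lt_lift_iff.1 hb
  exact ⟨b', hb', hp⟩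

theorem image_lift_Iio : lift.{u} '' Iio a = Iio (lift.{u} a) := by
  ext; simp [lt_lift_iff]

theorem image_lift_preimage {S : Set Ordinal.{max v u}} (hS : ∀ ξ ∈ S, ξ < lift.{u} a) :
    lift.{u} '' (lift.{u} ⁻¹' S) = S :=
  image_preimage_eq_of_subset fun ξ hξ ↦ mem_range_lift_of_le (hS ξ hξ).le

end Ordinal

section Lift

variable {X Y : Set Ordinal.{v}} {a : Ordinal.{v}}

theorem lift_omega1 : lift.{u} omega1.{v} = omega1.{max v u} := by
  simp [omega1_eq_omega_one]

theorem isLimitPoint_image_lift_iff :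
    IsLimitPoint (lift.{u} '' X) (lift.{u} a) ↔ IsLimitPoint X a := by
  simp [IsLimitPoint, forall_lt_lift_iff, lift_pos]

theorem measures_image_lift_iff :
    Measures (lift.{u} '' X) (lift.{u} '' Y) (lift.{u} a) ↔ Measures X Y a := by
  simp [Measures, exists_lt_lift_iff, subset_def, forall_mem_image, -mem_image,
    lift_injective.mem_set_image]

theorem isClosedCofinalIn_image_lift_iff :
    IsClosedCofinalIn (lift.{u} '' X) (lift.{u} a) ↔ IsClosedCofinalIn X a := by
  simp [IsClosedCofinalIn, forall_lt_lift_iff, isLimitPoint_image_lift_iff]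

theorem isClubOmega1_image_lift_iff : IsClubOmega1 (lift.{u} '' X) ↔ IsClubOmega1 X := by
  rw [IsClubOmega1, IsClubOmega1, ← lift_omega1.{u, v}]
  simp [forall_lt_lift_iff, isLimitPoint_image_lift_iff]

theorem Measuring.down (hM : Measuring.{max v u}) : Measuring.{v} := by
  intro c hc
  let c' (α : Ordinal.{max v u}) : Set Ordinal.{max v u} :=
    lift.{u} '' c (Function.invFun lift.{u} α)
  have hc' (a : Ordinal.{v}) : c' (lift.{u} a) = lift.{u} '' c a := by
    simp only [c', Function.leftInverse_invFun lift_injective a]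
  obtain ⟨D, hD, hmeas⟩ := hM c' <| by
    rw [← lift_omega1.{u, v}]
    simpa only [forall_lt_lift_iff, hc', isSuccLimit_lift, isClosedCofinalIn_image_lift_iff]
  have hD' : lift.{u} '' (lift.{u} ⁻¹' D) = D := image_lift_preimage (lift_omega1.{u, v} ▸ hD.1)
  refine ⟨lift.{u} ⁻¹' D, by rwa [← isClubOmega1_image_lift_iff.{u}, hD'], fun d hd hlim ↦ ?_⟩
  rw [← measures_image_lift_iff.{u}, image_inter lift_injective, image_lift_Iio, hD', ← hc']
  refine hmeas _ (lift_omega1.{u, v} ▸ lift_lt.2 hd) ?_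
  rwa [← hD', isLimitPoint_image_lift_iff]

theorem MeasuringOmega.up (h : MeasuringOmega.{v}) : MeasuringOmega.{max v u} := by
  intro 𝒞 h𝒞
  rw [← lift_omega1.{u, v}] at h𝒞 ⊢
  simp only [forall_lt_lift_iff, isSuccLimit_lift] at h𝒞 ⊢
  have h𝒞' (a : Ordinal.{v}) (ha : a < omega1) (hlim : IsSuccLimit a) :
      ∀ c ∈ 𝒞 (lift.{u} a), lift.{u} '' (lift.{u} ⁻¹' c) = c :=
    fun c hc ↦ image_lift_preimage ((h𝒞 a ha hlim).2 c hc).1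
  obtain ⟨D, hD, hmeas⟩ := h (fun a ↦ preimage lift.{u} '' 𝒞 (lift.{u} a)) fun a ha hlim ↦ by
    refine ⟨(h𝒞 a ha hlim).1.image _, ?_⟩
    rintro _ ⟨c, hc, rfl⟩
    rw [← isClosedCofinalIn_image_lift_iff.{u}, h𝒞' a ha hlim c hc]
    exact (h𝒞 a ha hlim).2 c hc
  refine ⟨lift.{u} '' D, isClubOmega1_image_lift_iff.2 hD, fun d hd hlim c hc ↦ ?_⟩
  rw [isLimitPoint_image_lift_iff] at hlim
  rw [← h𝒞' d hd hlim.isSuccLimit_s8 c hc, ← image_lift_Iio, ← image_inter lift_injective,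
    measures_image_lift_iff]
  exact hmeas d hd hlim _ ⟨c, hc, rfl⟩

end Lift

/-- Measuring implies Measuring_ω. -/
theorem measuring_omega_of_measuring
    (hM : ∀ c : Ordinal → Set Ordinal,
      (∀ α, α < omega1 → Order.IsSuccLimit α → IsClosedCofinalIn (c α) α) →
      ∃ D : Set Ordinal, IsClubOmega1 D ∧
        ∀ δ, δ < omega1 → IsLimitPoint D δ → Measures (D ∩ Set.Iio δ) (c δ) δ) :
    ∀ 𝒞 : Ordinal → Set (Set Ordinal),
      (∀ α, α < omega1 → Order.IsSuccLimit α →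
        (𝒞 α).Countable ∧ ∀ c ∈ 𝒞 α, IsClosedCofinalIn c α) →
      ∃ D : Set Ordinal, IsClubOmega1 D ∧
        ∀ δ, δ < omega1 → IsLimitPoint D δ → ∀ c ∈ 𝒞 δ, Measures (D ∩ Set.Iio δ) c δ :=
  (Measuring.down.{_, 0} hM).measuringOmega.up
end
end
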